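/- For nonzero PSD matrices K_X, K_Y ∈ ℝ^{M×M}, NBS(K_X, K_Y) ≥ Tr[K_X^{1/2} K_Y^{1/2}] / √(Tr K_X · Tr K_Y), i.e., the normalized Bures similarity is at least the CKA of the PSD square roots. -/

import Mathlib

/-! With `B = Kx^{1/2} Ky^{1/2}` we have `B Bᵀ = Kx^{1/2} Ky Kx^{1/2}`, so the fidelity is the trace
of `S = (B Bᵀ)^{1/2}`, the nuclear norm of `B`, and the claim is `tr B ≤ ‖B‖₁`. In an orthonormal
eigenbasis of `S` the rows of `B` have lengths equal to the eigenvalues of `S`, and a diagonal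
entry is at most the length of its row. -/

open Matrix

lemma real_conjTranspose_eq {m n : ℕ} (A : Matrix (Fin m) (Fin n) ℝ) : Aᴴ = Aᵀ := rfl

lemma psd_tmul {m n : ℕ} (A : Matrix (Fin m) (Fin n) ℝ) : (Aᵀ * A).PosSemidef := by
  have h := Matrix.posSemidef_conjTranspose_mul_self A
  rwa [real_conjTranspose_eq] at h

lemma psd_gram {m n : ℕ} (A : Matrix (Fin m) (Fin n) ℝ) : (A * Aᵀ).PosSemidef := by
  have h := Matrix.posSemidef_self_mul_conjTranspose A
  rwa [real_conjTranspose_eq] at h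

open scoped ComplexOrder in
/-- The positive semidefinite square root of a positive semidefinite matrix (as in the older Mathlib). -/
noncomputable def Matrix.PosSemidef.sqrt {n 𝕜 : Type*} [Fintype n] [RCLike 𝕜] [DecidableEq n]
    {A : Matrix n n 𝕜} (hA : A.PosSemidef) : Matrix n n 𝕜 :=
  hA.1.eigenvectorUnitary.1 * diagonal ((↑) ∘ (√·) ∘ hA.1.eigenvalues) *
    (star hA.1.eigenvectorUnitary : Matrix n n 𝕜)

open scoped ComplexOrder in
lemma Matrix.PosSemidef.posSemidef_sqrt {n 𝕜 : Type*} [Fintype n] [RCLike 𝕜] [DecidableEq n]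
    {A : Matrix n n 𝕜} (hA : A.PosSemidef) : hA.sqrt.PosSemidef := by
  unfold Matrix.PosSemidef.sqrt
  exact (posSemidef_diagonal_iff.2 fun i => RCLike.ofReal_nonneg.2 (Real.sqrt_nonneg _)).mul_mul_conjTranspose_same _

lemma psd_sand {M : ℕ} {Kx Ky : Matrix (Fin M) (Fin M) ℝ} (hx : Kx.PosSemidef) (hy : Ky.PosSemidef) :
    (hx.sqrt * Ky * hx.sqrt).PosSemidef := by
  have h := hy.mul_mul_conjTranspose_same hx.sqrt
  rwa [hx.posSemidef_sqrt.isHermitian.eq] at h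

/-- Nuclear norm: sum of singular values, i.e. `Tr[(AᵀA)^{1/2}]`. -/
noncomputable def nuclearNorm {m n : ℕ} (A : Matrix (Fin m) (Fin n) ℝ) : ℝ :=
  (Matrix.PosSemidef.sqrt (psd_tmul A)).trace

/-- Frobenius norm. -/
noncomputable def frobNorm {m n : ℕ} (A : Matrix (Fin m) (Fin n) ℝ) : ℝ :=
  Real.sqrt (Matrix.trace (Aᵀ * A))

/-- Fidelity `Tr[(Kx^{1/2} Ky Kx^{1/2})^{1/2}]` between PSD matrices. -/
noncomputable def fidelity {M : ℕ} {Kx Ky : Matrix (Fin M) (Fin M) ℝ}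
    (hx : Kx.PosSemidef) (hy : Ky.PosSemidef) : ℝ :=
  (Matrix.PosSemidef.sqrt (psd_sand hx hy)).trace

open scoped ComplexOrder in
theorem Matrix.PosSemidef.sqrt_mul_self {n 𝕜 : Type*} [Fintype n] [RCLike 𝕜] [DecidableEq n]
    {A : Matrix n n 𝕜} (hA : A.PosSemidef) : hA.sqrt * hA.sqrt = A := by
  set U : Matrix n n 𝕜 := (hA.1.eigenvectorUnitary : Matrix n n 𝕜)
  have hUU : star U * U = 1 := Unitary.coe_star_mul_self _
  conv_rhs => rw [hA.1.spectral_theorem, Unitary.conjStarAlgAut_apply]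
  rw [Matrix.PosSemidef.sqrt, show ∀ D : Matrix n n 𝕜, U * D * star U * (U * D * star U) =
      U * (D * (star U * U) * D) * star U by simp only [mul_assoc, forall_const], hUU, mul_one,
    diagonal_mul_diagonal]
  congr 3 with i
  simp only [Function.comp_apply, ← RCLike.ofReal_mul, Real.mul_self_sqrt (hA.eigenvalues_nonneg i)]

theorem Matrix.diag_le_sqrt_diag_mul_transpose {n : Type*} [Fintype n] (C : Matrix n n ℝ) (i : n) :
    C i i ≤ √((C * Cᵀ) i i) := by
  refine (le_abs_self _).trans (Real.abs_le_sqrt ?_)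
  rw [mul_apply]
  simpa only [transpose_apply, ← sq] using
    Finset.single_le_sum (f := fun j => C i j ^ 2) (fun j _ => sq_nonneg _) (Finset.mem_univ i)

theorem Matrix.trace_le_trace_of_mul_transpose_eq_mul_self {n : Type*} [Fintype n] [DecidableEq n]
    {B S : Matrix n n ℝ} (hS : S.PosSemidef) (h : B * Bᵀ = S * S) : B.trace ≤ S.trace := by
  set U : Matrix n n ℝ := (hS.1.eigenvectorUnitary : Matrix n n ℝ)
  set d := hS.1.eigenvalues
  have hUU : U * Uᵀ = 1 := Unitary.coe_mul_star_self _
  have hdiag : Uᵀ * S * U = diagonal d := by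
    have h := hS.1.conjStarAlgAut_star_eigenvectorUnitary
    simp only [Unitary.conjStarAlgAut_star_apply] at h
    exact h
  set C := Uᵀ * B * U
  have hC : C * Cᵀ = diagonal d * diagonal d := by
    calc C * Cᵀ = Uᵀ * (B * Bᵀ) * U := by
          simp only [C, transpose_mul, transpose_transpose, mul_assoc]
          rw [← mul_assoc U Uᵀ, hUU, one_mul]
      _ = (Uᵀ * S * U) * (Uᵀ * S * U) := by
          rw [h]; simp only [mul_assoc]; rw [← mul_assoc U Uᵀ, hUU, one_mul]
      _ = diagonal d * diagonal d := by rw [hdiag]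
  calc B.trace = C.trace := by rw [trace_mul_comm, ← mul_assoc, hUU, one_mul]
    _ ≤ ∑ i, d i := Finset.sum_le_sum fun i _ => by
        have h := C.diag_le_sqrt_diag_mul_transpose i
        rwa [hC, diagonal_mul_diagonal, diagonal_apply_eq,
          Real.sqrt_mul_self (hS.eigenvalues_nonneg i)] at h
    _ = S.trace := by simp [hS.1.trace_eq_sum_eigenvalues, d]

theorem trace_sqrt_mul_sqrt_le_fidelity {M : ℕ} {Kx Ky : Matrix (Fin M) (Fin M) ℝ}
    (hx : Kx.PosSemidef) (hy : Ky.PosSemidef) : (hx.sqrt * hy.sqrt).trace ≤ fidelity hx hy := by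
  refine trace_le_trace_of_mul_transpose_eq_mul_self (psd_sand hx hy).posSemidef_sqrt ?_
  rw [(psd_sand hx hy).sqrt_mul_self, transpose_mul, ← real_conjTranspose_eq,
    ← real_conjTranspose_eq, hx.posSemidef_sqrt.isHermitian.eq, hy.posSemidef_sqrt.isHermitian.eq,
    mul_assoc, ← mul_assoc hy.sqrt, hy.sqrt_mul_self, mul_assoc]

theorem nbs_ge_cka_of_sqrts_general (M : ℕ) (Kx Ky : Matrix (Fin M) (Fin M) ℝ)
    (hx : Kx.PosSemidef) (hy : Ky.PosSemidef) :
    fidelity hx hy / Real.sqrt (Matrix.trace Kx * Matrix.trace Ky) ≥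
      Matrix.trace (hx.sqrt * hy.sqrt) / Real.sqrt (Matrix.trace Kx * Matrix.trace Ky) :=
  div_le_div_of_nonneg_right (trace_sqrt_mul_sqrt_le_fidelity hx hy) (Real.sqrt_nonneg _)

theorem nbs_ge_cka_of_sqrts (M : ℕ) (Kx Ky : Matrix (Fin M) (Fin M) ℝ)
    (hx : Kx.PosSemidef) (hy : Ky.PosSemidef) (hx0 : Kx ≠ 0) (hy0 : Ky ≠ 0) :
    fidelity hx hy / Real.sqrt (Matrix.trace Kx * Matrix.trace Ky) ≥
      Matrix.trace (hx.sqrt * hy.sqrt) / Real.sqrt (Matrix.trace Kx * Matrix.trace Ky) :=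
  nbs_ge_cka_of_sqrts_general M Kx Ky hx hy
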